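/- arXiv:1812.08228 — 3 statements merged into one kernel-verified Lean document; each statement's English description precedes it below -/
import Mathlib

section
/- Let β ∈ ℂ with |β| > 1, let A ⊂ ℂ be finite, and let V ⊂ ℂ be a nonempty bounded set satisfying βV ⊆ ⋃_{a∈A} (V + a). Then every x ∈ V admits a representation x = ∑_{i=1}^∞ a_i β^{-i} with all a_i ∈ A. -/
/-!
Thurston's construction. The covering hypothesis gives a map `T : V → V` and digits `D(y) ∈ A`
with `β y = T y + D y`. Along the orbit `y n = Tⁿ x` with digits `a n = D (y n)` the identity
telescopes to `x = ∑_{i < n} a i β^{-(i+1)} + β^{-n} y n`; the remainder tends to `0` because `V`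
is bounded and `|β| > 1`, and the digits `a n = β y n - y (n + 1)` are bounded, so the series
converges absolutely.
-/

open Filter Topology Finset

lemma eq_sum_digit_mul_inv_pow_add {K : Type*} [Field K] {β : K} {a y : ℕ → K} (hβ : β ≠ 0)
    (h : ∀ n, β * y n = y (n + 1) + a n) (n : ℕ) :
    y 0 = ∑ i ∈ range n, a i * (β ^ (i + 1))⁻¹ + (β ^ n)⁻¹ * y n := by
  induction n with
  | zero => simp
  | succ n ih =>
    rw [sum_range_succ, ih, (eq_inv_mul_iff_mul_eq₀ hβ).mpr (h n)]
    field_simp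
    ring

section NormedField

variable {𝕜 : Type*} [NormedField 𝕜] {β : 𝕜} {a y : ℕ → 𝕜} {C : ℝ}

lemma tendsto_inv_pow_mul_nhds_zero (hβ : 1 < ‖β‖) (hy : ∀ n, ‖y n‖ ≤ C) :
    Tendsto (fun n => (β ^ n)⁻¹ * y n) atTop (𝓝 0) := by
  have hr : ‖β‖⁻¹ < 1 := inv_lt_one_of_one_lt₀ hβ
  have hgeom := (tendsto_pow_atTop_nhds_zero_of_lt_one (by positivity) hr).mul_const C
  rw [zero_mul] at hgeom
  refine squeeze_zero_norm (fun n => ?_) hgeom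
  rw [norm_mul, norm_inv, norm_pow, ← inv_pow]
  exact mul_le_mul_of_nonneg_left (hy n) (by positivity)

lemma summable_norm_digit_mul_inv_pow (hβ : 1 < ‖β‖) (hy : ∀ n, ‖y n‖ ≤ C)
    (h : ∀ n, β * y n = y (n + 1) + a n) :
    Summable fun i => ‖a i * (β ^ (i + 1))⁻¹‖ := by
  have hr : ‖β‖⁻¹ < 1 := inv_lt_one_of_one_lt₀ hβ
  have ha : ∀ n, ‖a n‖ ≤ (‖β‖ + 1) * C := fun n => calc
    ‖a n‖ = ‖β * y n - y (n + 1)‖ := by rw [h n, add_sub_cancel_left]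
    _ ≤ ‖β‖ * ‖y n‖ + ‖y (n + 1)‖ := by grw [norm_sub_le, norm_mul]
    _ ≤ ‖β‖ * C + C := by gcongr <;> exact hy _
    _ = (‖β‖ + 1) * C := by ring
  refine .of_nonneg_of_le (fun _ => norm_nonneg _) (fun i => ?_)
    ((summable_geometric_of_lt_one (by positivity) hr).mul_left ((‖β‖ + 1) * C))
  rw [norm_mul, norm_inv, norm_pow, ← inv_pow]
  calc ‖a i‖ * ‖β‖⁻¹ ^ (i + 1) ≤ (‖β‖ + 1) * C * ‖β‖⁻¹ ^ (i + 1) := by grw [ha i]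
    _ ≤ (‖β‖ + 1) * C * ‖β‖⁻¹ ^ i :=
      mul_le_mul_of_nonneg_left (pow_le_pow_of_le_one (by positivity) hr.le i.le_succ)
        ((norm_nonneg _).trans (ha 0))

lemma hasSum_digit_mul_inv_pow (hβ : 1 < ‖β‖) (hy : ∀ n, ‖y n‖ ≤ C)
    (h : ∀ n, β * y n = y (n + 1) + a n) :
    HasSum (fun i => a i * (β ^ (i + 1))⁻¹) (y 0) := by
  have hβ0 : β ≠ 0 := norm_pos_iff.mp (one_pos.trans hβ)
  have hs := summable_norm_digit_mul_inv_pow hβ hy h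
  rw [hasSum_iff_tendsto_nat_of_summable_norm hs]
  have hpartial : ∀ n, ∑ i ∈ range n, a i * (β ^ (i + 1))⁻¹ = y 0 - (β ^ n)⁻¹ * y n := fun n =>
    eq_sub_of_add_eq (eq_sum_digit_mul_inv_pow_add hβ0 h n).symm
  have hlim := tendsto_const_nhds (x := y 0) |>.sub (tendsto_inv_pow_mul_nhds_zero hβ hy)
  rw [sub_zero] at hlim
  exact hlim.congr fun n => (hpartial n).symm

end NormedField

lemma exists_orbit_of_mul_image_subset {R : Type*} [Mul R] [Add R] {β : R} {A V : Set R}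
    (hcov : (fun y => β * y) '' V ⊆ ⋃ a ∈ A, (fun y => y + a) '' V) {x : R} (hx : x ∈ V) :
    ∃ a y : ℕ → R, (∀ n, a n ∈ A) ∧ (∀ n, y n ∈ V) ∧ y 0 = x ∧
      ∀ n, β * y n = y (n + 1) + a n := by
  have hstep : ∀ y : V, ∃ p : A × V, β * y = p.2 + p.1 := fun ⟨y, hy⟩ => by
    obtain ⟨a, ha, z, hz, hza⟩ := Set.mem_iUnion₂.mp (hcov ⟨y, hy, rfl⟩)
    exact ⟨(⟨a, ha⟩, ⟨z, hz⟩), hza.symm⟩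
  choose step hstep using hstep
  let orbit : ℕ → V := fun n => (fun y => (step y).2)^[n] ⟨x, hx⟩
  refine ⟨fun n => (step (orbit n)).1, fun n => orbit n, fun n => (step _).1.2,
    fun n => (orbit n).2, rfl, fun n => ?_⟩
  simp only [orbit, Function.iterate_succ_apply']
  exact hstep _

theorem stmt_3_general (β : ℂ) (hβ : 1 < ‖β‖) (A : Finset ℂ)
    (V : Set ℂ) (hVbd : Bornology.IsBounded V)
    (hcov : (fun y => β * y) '' V ⊆ ⋃ a ∈ A, (fun y => y + a) '' V) :
    ∀ x ∈ V, ∃ a : ℕ → ℂ, (∀ i, a i ∈ A) ∧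
      HasSum (fun i : ℕ => a i * (β ^ (i + 1))⁻¹) x := by
  intro x hx
  obtain ⟨C, hC⟩ := hVbd.exists_norm_le
  obtain ⟨a, y, haA, hyV, rfl, hay⟩ := exists_orbit_of_mul_image_subset (A := (A : Set ℂ)) hcov hx
  exact ⟨a, haA, hasSum_digit_mul_inv_pow hβ (fun n => hC _ (hyV n)) hay⟩

/-- Thurston's construction: if `V` is nonempty, bounded and `βV ⊆ ⋃_{a ∈ A} (V + a)`,
then every `x ∈ V` has a representation `x = ∑_{i=1}^∞ a_i β^{-i}` with `a_i ∈ A`. -/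
theorem stmt_3 (β : ℂ) (hβ : 1 < ‖β‖) (A : Finset ℂ)
    (V : Set ℂ) (hVne : V.Nonempty) (hVbd : Bornology.IsBounded V)
    (hcov : (fun y => β * y) '' V ⊆ ⋃ a ∈ A, (fun y => y + a) '' V) :
    ∀ x ∈ V, ∃ a : ℕ → ℂ, (∀ i, a i ∈ A) ∧
      HasSum (fun i : ℕ => a i * (β ^ (i + 1))⁻¹) x :=
  stmt_3_general β hβ A V hVbd hcov
end

section
/- Let β ∈ ℂ with |β| > 1 and let A ⊂ ℂ be finite. If 0 lies in the interior of the attractor K(β,A) = {∑_{i=1}^∞ a_i β^{-i} : a_i ∈ A} in ℂ, then the spectrum X^A(β) = {∑_{i=0}^n a_i β^i : n ∈ ℕ, a_i ∈ A} is relatively dense in ℂ, i.e., there exists R > 0 such that every ball of radius R in ℂ contains a point of X^A(β). -/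
/-- The set of all `∑_{i=1}^∞ a_i β^{-i}` with digits `a_i ∈ A`. -/
def attractor (β : ℂ) (A : Set ℂ) : Set ℂ :=
  {x | ∃ a : ℕ → ℂ, (∀ i, a i ∈ A) ∧ HasSum (fun i : ℕ => a i * (β ^ (i + 1))⁻¹) x}

/-- The spectrum `X^A(β) = {∑_{i=0}^n a_i β^i : n ∈ ℕ, a_i ∈ A}`. -/
def spectrumSet (β : ℂ) (A : Set ℂ) : Set ℂ :=
  {x | ∃ (n : ℕ) (a : ℕ → ℂ), (∀ i, a i ∈ A) ∧ x = ∑ i ∈ Finset.range (n + 1), a i * β ^ i}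

/-!
Every point of the attractor has norm at most `M / (|β| - 1)`, where `M` bounds the digits.
Multiplying a point of the attractor by `β` pops its first digit off: `β x = a₁ + x'` with
`x'` again in the attractor. Given `z`, the point `β^{-(n+1)} z` lies in the ball around `0`
contained in the attractor once `n` is large; popping `n + 1` digits writes
`z = s + y` with `s` in the spectrum and `y` in the attractor, so `|z - s| ≤ M / (|β| - 1)`.
-/

open Filter Topology

lemma norm_le_div_of_mem_attractor {β : ℂ} (hβ : 1 < ‖β‖) {A : Set ℂ} {M : ℝ}
    (hM : ∀ a ∈ A, ‖a‖ ≤ M) {x : ℂ} (hx : x ∈ attractor β A) :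
    ‖x‖ ≤ M / (‖β‖ - 1) := by
  obtain ⟨a, ha, hsum⟩ := hx
  set r := ‖β‖⁻¹
  have hr : r < 1 := inv_lt_one_of_one_lt₀ hβ
  have hgeom : HasSum (fun i : ℕ => M * r * r ^ i) (M * r * (1 - r)⁻¹) :=
    (hasSum_geometric_of_lt_one (by positivity) hr).mul_left _
  have hterm : ∀ i : ℕ, ‖a i * (β ^ (i + 1))⁻¹‖ ≤ M * r * r ^ i := by
    intro i
    rw [norm_mul, norm_inv, norm_pow, ← inv_pow, pow_succ', ← mul_assoc]
    gcongr
    exact hM _ (ha i)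
  calc ‖x‖ ≤ M * r * (1 - r)⁻¹ := hsum.norm_le_of_bounded hgeom hterm
    _ = M / (‖β‖ - 1) := by
      have : ‖β‖ - 1 ≠ 0 := by linarith
      have : ‖β‖ ≠ 0 := by positivity
      simp only [r]
      field_simp

lemma exists_mul_eq_add_of_mem_attractor {β : ℂ} (hβ : β ≠ 0) {A : Set ℂ} {x : ℂ}
    (hx : x ∈ attractor β A) : ∃ a ∈ A, ∃ y ∈ attractor β A, β * x = a + y := by
  obtain ⟨a, ha, hsum⟩ := hx
  refine ⟨a 0, ha 0, β * x - a 0, ⟨fun i => a (i + 1), fun i => ha _, ?_⟩, by ring⟩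
  have hshift := (hasSum_nat_add_iff' 1).mpr (hsum.mul_left β)
  have hfirst : ∑ i ∈ Finset.range 1, β * (a i * (β ^ (i + 1))⁻¹) = a 0 := by
    simp only [Finset.sum_range_one, zero_add, pow_one]
    field_simp
  have htail : (fun i => β * (a (i + 1) * (β ^ (i + 1 + 1))⁻¹)) =
      fun i => a (i + 1) * (β ^ (i + 1))⁻¹ := by
    funext i
    rw [pow_succ _ (i + 1), mul_inv]
    field_simp
  rwa [hfirst, htail] at hshift

lemma mem_spectrumSet_of_mem {β : ℂ} {A : Set ℂ} {a : ℂ} (ha : a ∈ A) :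
    a ∈ spectrumSet β A :=
  ⟨0, fun _ => a, fun _ => ha, by simp⟩

lemma add_mul_mem_spectrumSet {β : ℂ} {A : Set ℂ} {a s : ℂ} (ha : a ∈ A)
    (hs : s ∈ spectrumSet β A) : a + β * s ∈ spectrumSet β A := by
  obtain ⟨n, c, hc, rfl⟩ := hs
  refine ⟨n + 1, fun i => if i = 0 then a else c (i - 1), ?_, ?_⟩
  · intro i
    dsimp only
    split_ifs
    exacts [ha, hc _]
  · rw [Finset.sum_range_succ' _ (n + 1), Finset.mul_sum]
    simp only [Nat.add_one_ne_zero, if_false, Nat.add_sub_cancel, if_true, pow_zero, mul_one]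
    rw [add_comm]
    exact congrArg (· + a) (Finset.sum_congr rfl fun i _ => by ring)

lemma exists_pow_mul_eq_add_of_mem_attractor {β : ℂ} (hβ : β ≠ 0) {A : Set ℂ} {x : ℂ}
    (hx : x ∈ attractor β A) (n : ℕ) :
    ∃ s ∈ spectrumSet β A, ∃ y ∈ attractor β A, β ^ (n + 1) * x = s + y := by
  induction n with
  | zero =>
    obtain ⟨a, ha, y, hy, hxy⟩ := exists_mul_eq_add_of_mem_attractor hβ hx
    exact ⟨a, mem_spectrumSet_of_mem ha, y, hy, by rw [zero_add, pow_one, hxy]⟩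
  | succ n ih =>
    obtain ⟨s, hs, y, hy, hxsy⟩ := ih
    obtain ⟨a, ha, y', hy', hyy'⟩ := exists_mul_eq_add_of_mem_attractor hβ hy
    refine ⟨a + β * s, add_mul_mem_spectrumSet ha hs, y', hy', ?_⟩
    rw [pow_succ', mul_assoc, hxsy, mul_add, hyy']
    ring

lemma exists_inv_pow_mul_mem_attractor {β : ℂ} (hβ : 1 < ‖β‖) {A : Set ℂ}
    (h0 : (0 : ℂ) ∈ interior (attractor β A)) (z : ℂ) :
    ∃ n : ℕ, (β ^ (n + 1))⁻¹ * z ∈ attractor β A := by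
  have hlim : Tendsto (fun n : ℕ => (β⁻¹) ^ n * z) atTop (𝓝 0) := by
    simpa only [zero_mul] using (tendsto_pow_atTop_nhds_zero_of_norm_lt_one
      (by rw [norm_inv]; exact inv_lt_one_of_one_lt₀ hβ)).mul_const z
  obtain ⟨n, hn⟩ := ((tendsto_add_atTop_iff_nat 1).mpr hlim).eventually
    (mem_interior_iff_mem_nhds.mp h0) |>.exists
  exact ⟨n, by rw [← inv_pow]; exact hn⟩

/-- If `0 ∈ int K(β,A)`, then the spectrum `X^A(β)` is relatively dense in `ℂ`. -/
theorem stmt_7 (β : ℂ) (hβ : 1 < ‖β‖) (A : Finset ℂ)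
    (h0 : (0 : ℂ) ∈ interior (attractor β A)) :
    ∃ R > (0 : ℝ), ∀ z : ℂ, ∃ x ∈ spectrumSet β A, ‖z - x‖ ≤ R := by
  have hβ0 : β ≠ 0 := norm_pos_iff.mp (by linarith)
  set M := ∑ a ∈ A, ‖a‖
  have hM : ∀ a ∈ (A : Set ℂ), ‖a‖ ≤ M := fun a ha =>
    Finset.single_le_sum (fun b _ => norm_nonneg b) (Finset.mem_coe.mp ha)
  have hM0 : 0 ≤ M := Finset.sum_nonneg fun a _ => norm_nonneg a
  have hβ1 : 0 < ‖β‖ - 1 := by linarith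
  refine ⟨M / (‖β‖ - 1) + 1, by positivity, fun z => ?_⟩
  obtain ⟨n, hn⟩ := exists_inv_pow_mul_mem_attractor hβ h0 z
  obtain ⟨s, hs, y, hy, hzsy⟩ := exists_pow_mul_eq_add_of_mem_attractor hβ0 hn n
  rw [mul_inv_cancel_left₀ (pow_ne_zero _ hβ0)] at hzsy
  refine ⟨s, hs, ?_⟩
  rw [hzsy, add_sub_cancel_left]
  linarith [norm_le_div_of_mem_attractor hβ hM hy]
end

section
/- Let β be an algebraic integer of degree d all of whose Galois conjugates β' ≠ β satisfy |β'| < 1 (β is a Pisot number if β > 1 real, or together with its complex conjugate if complex), with |β| > 1. Let A ⊂ ℤ be a finite set. Then the spectrum X^A(β) = {∑_{i=0}^n a_i β^i : n ∈ ℕ, a_i ∈ A} is uniformly discrete in ℂ: there exists ε > 0 such that any two distinct elements x, y ∈ X^A(β) satisfy |x − y| ≥ ε. -/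
/-!
Write `x - y = r(β)` with `r ∈ ℤ[X]` whose coefficients lie in `A - A`, and let `g` be `β` viewed
in `K = ℚ(β)`. Since `r(g)` is a nonzero algebraic integer, its norm is a nonzero integer, so
`1 ≤ ∏_σ ‖r(σ g)‖` over the embeddings `σ : K → ℂ`. The factors with `‖σ g‖ < 1` are bounded by
geometric series, independently of `r`, and all other factors equal `‖x - y‖` because those
`σ g` are `β` or `conj β`. Hence `‖x - y‖` is bounded below.
-/

open Polynomial Finset NumberField IntermediateField

theorem one_le_prod_norm_algHom_apply {K : Type*} [Field K] [NumberField K] {w : K}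
    (hw : IsIntegral ℤ w) (hw0 : w ≠ 0) : 1 ≤ ∏ σ : K →ₐ[ℚ] ℂ, ‖σ w‖ := by
  let x : 𝓞 K := ⟨w, hw⟩
  have hx0 : x ≠ 0 := fun h => hw0 (congrArg Subtype.val h)
  rw [← norm_prod, ← Algebra.norm_eq_prod_embeddings, eq_ratCast, Complex.norm_ratCast,
    show w = (x : K) from rfl, ← Algebra.coe_norm_int, Rat.cast_intCast]
  exact_mod_cast Int.one_le_abs (Algebra.norm_ne_zero_iff.mpr hx0)

theorem norm_aeval_le_of_norm_lt_one {z : ℂ} (hz : ‖z‖ < 1) {B : ℝ} {r : ℤ[X]}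
    (hr : ∀ i, |(r.coeff i : ℝ)| ≤ B) : ‖aeval z r‖ ≤ B / (1 - ‖z‖) := by
  have hB : 0 ≤ B := (abs_nonneg _).trans (hr 0)
  rw [aeval_eq_sum_range]
  calc ‖∑ i ∈ range (r.natDegree + 1), r.coeff i • z ^ i‖
      ≤ ∑ i ∈ range (r.natDegree + 1), B * ‖z‖ ^ i := by
        refine norm_sum_le_of_le _ fun i _ => ?_
        rw [zsmul_eq_mul, norm_mul, norm_pow, Complex.norm_intCast]
        gcongr
        exact hr i
    _ = B * ∑ i ∈ range (r.natDegree + 1), ‖z‖ ^ i := (mul_sum _ _ _).symm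
    _ ≤ B * (1 / (1 - ‖z‖)) := by
        gcongr
        simpa [Nat.Ico_zero_eq_range] using
          geom_sum_Ico_le_of_lt_one (m := 0) (n := r.natDegree + 1) (norm_nonneg z) hz
    _ = B / (1 - ‖z‖) := mul_one_div _ _

noncomputable def digitPoly (a : ℕ → ℤ) (n : ℕ) : ℤ[X] := ∑ i ∈ range (n + 1), C (a i) * X ^ i

theorem aeval_digitPoly {R : Type*} [CommRing R] (z : R) (a : ℕ → ℤ) (n : ℕ) :
    aeval z (digitPoly a n) = ∑ i ∈ range (n + 1), (a i : R) * z ^ i := by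
  simp [digitPoly]

theorem coeff_digitPoly (a : ℕ → ℤ) (n i : ℕ) :
    (digitPoly a n).coeff i = if i ≤ n then a i else 0 := by
  simp [digitPoly, finsetSum_coeff]

theorem abs_coeff_digitPoly_le {a : ℕ → ℤ} {M : ℝ} (hM : ∀ i, |(a i : ℝ)| ≤ M) (n i : ℕ) :
    |((digitPoly a n).coeff i : ℝ)| ≤ M := by
  rw [coeff_digitPoly]
  split_ifs
  · exact hM i
  · simpa using (abs_nonneg _).trans (hM i)

section SmallConjugates

variable {K : Type*} [Field K] [NumberField K]

/-- The factor `B / (1 - ‖σ g‖)` bounds `‖r(σ g)‖` when `‖σ g‖ < 1` and the coefficients of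
`r ∈ ℤ[X]` are bounded by `B`; for the other `σ` it is meaningless and only the `max 1` matters. -/
noncomputable def smallConjugatesBound (g : K) (B : ℝ) : ℝ :=
  ∏ σ : K →ₐ[ℚ] ℂ, max 1 (B / (1 - ‖σ g‖))

theorem one_le_smallConjugatesBound (g : K) (B : ℝ) : 1 ≤ smallConjugatesBound g B :=
  one_le_prod fun _ _ => le_max_left _ _

theorem prod_norm_aeval_small_le {g : K} {B : ℝ} {r : ℤ[X]}
    (hr : ∀ i, |(r.coeff i : ℝ)| ≤ B) :
    ∏ σ ∈ univ.filter (fun σ : K →ₐ[ℚ] ℂ => ‖σ g‖ < 1), ‖aeval (σ g) r‖ ≤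
      smallConjugatesBound g B :=
  calc ∏ σ ∈ univ.filter (fun σ : K →ₐ[ℚ] ℂ => ‖σ g‖ < 1), ‖aeval (σ g) r‖
      ≤ ∏ σ ∈ univ.filter (fun σ : K →ₐ[ℚ] ℂ => ‖σ g‖ < 1), max 1 (B / (1 - ‖σ g‖)) :=
        prod_le_prod (fun _ _ => norm_nonneg _) fun _ hσ =>
          (norm_aeval_le_of_norm_lt_one (mem_filter.mp hσ).2 hr).trans (le_max_right _ _)
    _ ≤ smallConjugatesBound g B :=
        prod_le_prod_of_subset_of_one_le (filter_subset _ _)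
          (fun _ _ => zero_le_one.trans (le_max_left _ _)) fun _ _ _ => le_max_left _ _

theorem one_le_smallConjugatesBound_mul_prod_norm_aeval_large {g : K} (hg : IsIntegral ℤ g)
    {B : ℝ} {r : ℤ[X]} (hr : ∀ i, |(r.coeff i : ℝ)| ≤ B) (hr0 : aeval g r ≠ 0) :
    1 ≤ smallConjugatesBound g B *
      ∏ σ ∈ univ.filter (fun σ : K →ₐ[ℚ] ℂ => ¬‖σ g‖ < 1), ‖aeval (σ g) r‖ := by
  have hint : IsIntegral ℤ (aeval g r) := by
    have := (aeval (⟨g, hg⟩ : integralClosure ℤ K) r).2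
    rwa [← Subalgebra.aeval_coe] at this
  calc (1 : ℝ) ≤ ∏ σ : K →ₐ[ℚ] ℂ, ‖σ (aeval g r)‖ := one_le_prod_norm_algHom_apply hint hr0
    _ = ∏ σ : K →ₐ[ℚ] ℂ, ‖aeval (σ g) r‖ := prod_congr rfl fun σ _ =>
        congrArg norm (aeval_algHom_apply (σ.restrictScalars ℤ) g r).symm
    _ = (∏ σ ∈ univ.filter (fun σ : K →ₐ[ℚ] ℂ => ‖σ g‖ < 1), ‖aeval (σ g) r‖) *
          ∏ σ ∈ univ.filter (fun σ : K →ₐ[ℚ] ℂ => ¬‖σ g‖ < 1), ‖aeval (σ g) r‖ :=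
        (prod_filter_mul_prod_filter_not _ _ _).symm
    _ ≤ _ := by gcongr; exact prod_norm_aeval_small_le hr

end SmallConjugates

theorem norm_aeval_conj (z : ℂ) (r : ℤ[X]) : ‖aeval (starRingEnd ℂ z) r‖ = ‖aeval z r‖ := by
  rw [show aeval (starRingEnd ℂ z) r = starRingEnd ℂ (aeval z r) from
    aeval_algHom_apply (starRingEnd ℂ).toIntAlgHom z r, Complex.norm_conj]

theorem norm_aeval_algHom_gen_eq {β : ℂ}
    (hconj : ∀ β' : ℂ, aeval β' (minpoly ℚ β) = 0 → β' ≠ β → β' ≠ starRingEnd ℂ β → ‖β'‖ < 1)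
    (σ : ℚ⟮β⟯ →ₐ[ℚ] ℂ) (hσ : ¬‖σ (AdjoinSimple.gen ℚ β)‖ < 1) (r : ℤ[X]) :
    ‖aeval (σ (AdjoinSimple.gen ℚ β)) r‖ = ‖aeval β r‖ := by
  have hroot : aeval (σ (AdjoinSimple.gen ℚ β)) (minpoly ℚ β) = 0 := by
    rw [← minpoly_gen, aeval_algHom_apply]
    exact (congrArg σ (minpoly.aeval ℚ _)).trans (map_zero σ)
  by_cases hβ : σ (AdjoinSimple.gen ℚ β) = β
  · rw [hβ]
  by_cases hβ' : σ (AdjoinSimple.gen ℚ β) = starRingEnd ℂ β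
  · rw [hβ', norm_aeval_conj]
  exact absurd (hconj _ hroot hβ hβ') hσ

theorem inv_le_of_one_le_mul_pow {C t : ℝ} {k : ℕ} (hC : 1 ≤ C) (ht : 0 ≤ t) (hk : k ≠ 0)
    (h : 1 ≤ C * t ^ k) : C⁻¹ ≤ t := by
  rcases le_or_gt 1 t with ht1 | ht1
  · exact (inv_le_one_of_one_le₀ hC).trans ht1
  · rw [inv_le_iff_one_le_mul₀' (zero_lt_one.trans_le hC)]
    exact h.trans (by gcongr; exact pow_le_of_le_one ht ht1.le hk)

/-- If `β` is an algebraic integer with `|β| > 1` all of whose Galois conjugates other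
than `β` (and its complex conjugate) lie strictly inside the unit circle, then for any
finite `A ⊂ ℤ` the spectrum `X^A(β)` is uniformly discrete in `ℂ`. -/
theorem stmt_9 (β : ℂ) (hint : IsIntegral ℤ β) (hβ : 1 < ‖β‖)
    (hconj : ∀ β' : ℂ, Polynomial.aeval β' (minpoly ℚ β) = 0 →
      β' ≠ β → β' ≠ (starRingEnd ℂ) β → ‖β'‖ < 1)
    (A : Finset ℤ) :
    ∃ ε > (0 : ℝ), ∀ x y : ℂ,
      (∃ (n : ℕ) (a : ℕ → ℤ), (∀ i, a i ∈ A) ∧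
        x = ∑ i ∈ Finset.range (n + 1), (a i : ℂ) * β ^ i) →
      (∃ (m : ℕ) (b : ℕ → ℤ), (∀ i, b i ∈ A) ∧
        y = ∑ i ∈ Finset.range (m + 1), (b i : ℂ) * β ^ i) →
      x ≠ y → ε ≤ ‖x - y‖ := by
  have : NumberField ℚ⟮β⟯ := { to_finiteDimensional := adjoin.finiteDimensional hint.tower_top }
  set g := AdjoinSimple.gen ℚ β
  have hg : IsIntegral ℤ g := by
    rwa [← isIntegral_algebraMap_iff (algebraMap ℚ⟮β⟯ ℂ).injective, AdjoinSimple.algebraMap_gen]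
  obtain ⟨M, hM⟩ : ∃ M : ℝ, ∀ a ∈ A, |(a : ℝ)| ≤ M :=
    ⟨∑ a ∈ A, |(a : ℝ)|, fun _ ha =>
      single_le_sum (f := fun a : ℤ => |(a : ℝ)|) (fun _ _ => abs_nonneg _) ha⟩
  have hC := one_le_smallConjugatesBound g (2 * M)
  refine ⟨(smallConjugatesBound g (2 * M))⁻¹, inv_pos.mpr (zero_lt_one.trans_le hC), ?_⟩
  rintro x y ⟨n, a, ha, hx⟩ ⟨m, b, hb, hy⟩ hxy
  set r := digitPoly a n - digitPoly b m
  have hr (i : ℕ) : |(r.coeff i : ℝ)| ≤ 2 * M := by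
    rw [coeff_sub, Int.cast_sub, two_mul]
    exact (abs_sub _ _).trans (add_le_add (abs_coeff_digitPoly_le (fun i => hM _ (ha i)) n i)
      (abs_coeff_digitPoly_le (fun i => hM _ (hb i)) m i))
  have hr_eq : aeval β r = x - y := by simp only [r, map_sub, aeval_digitPoly, hx, hy]
  have hr0 : aeval g r ≠ 0 := fun h => hxy <| sub_eq_zero.mp <| by
    rw [← hr_eq, ← AdjoinSimple.algebraMap_gen ℚ β, aeval_algebraMap_apply, h, map_zero]
  have hprod := one_le_smallConjugatesBound_mul_prod_norm_aeval_large hg hr hr0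
  rw [prod_congr rfl fun σ hσ => norm_aeval_algHom_gen_eq hconj σ (mem_filter.mp hσ).2 r,
    prod_const, hr_eq] at hprod
  refine inv_le_of_one_le_mul_pow hC (norm_nonneg _) (card_ne_zero.mpr ?_) hprod
  refine ⟨IsScalarTower.toAlgHom ℚ ℚ⟮β⟯ ℂ, mem_filter.mpr ⟨mem_univ _, ?_⟩⟩
  simpa [g] using hβ.le
end
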